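/- Symmetrization of the rest-state D2Q7 Jacobian: let h̄ > 0, e > 0 and 0 < g < e²/(2h̄). Let A be the 7×7 matrix with A_{0j} = (e² − 2gh̄)/e² for all j and A_{ij} = gh̄/(3e²) + (ξ_i·ξ_j)/(3e²) for i = 1,…,6, and let B₀ = diag(e²/(e² − 2gh̄), (3e²/(gh̄))·I₆). Then B₀ is symmetric positive definite and B₀·A = J₇ + (1/(gh̄))·G, where J₇ is the 7×7 all-ones matrix and G is the Gram matrix G_{ij} = ξ_i·ξ_j; in particular B₀·A is symmetric. -/

import Mathlib

/-- Dot product on `ℝ × ℝ`. -/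
def pdot (a b : ℝ × ℝ) : ℝ := a.1 * b.1 + a.2 * b.2

/-- The D2Q7 lattice velocities with lattice speed `e`. -/
noncomputable def xi7 (e : ℝ) : Fin 7 → ℝ × ℝ :=
  ![(0, 0), (e, 0), (e / 2, e * Real.sqrt 3 / 2), (-e / 2, e * Real.sqrt 3 / 2),
    (-e, 0), (-e / 2, -(e * Real.sqrt 3 / 2)), (e / 2, -(e * Real.sqrt 3 / 2))]

/-- The Jacobian of the D2Q7 equilibrium distribution at the rest state `(h̄, 0)`. -/
noncomputable def A7 (g e hb : ℝ) : Matrix (Fin 7) (Fin 7) ℝ :=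
  Matrix.of fun i j =>
    if i = 0 then (e ^ 2 - 2 * g * hb) / e ^ 2
    else g * hb / (3 * e ^ 2) + pdot (xi7 e i) (xi7 e j) / (3 * e ^ 2)

/-- The diagonal symmetrizer `B₀`. -/
noncomputable def B7 (g e hb : ℝ) : Matrix (Fin 7) (Fin 7) ℝ :=
  Matrix.diagonal fun i =>
    if i = 0 then e ^ 2 / (e ^ 2 - 2 * g * hb) else 3 * e ^ 2 / (g * hb)

theorem d2q7_symmetrization (hb e g : ℝ) (hhb : 0 < hb) (he : 0 < e)
    (hg0 : 0 < g) (hg : g < e ^ 2 / (2 * hb)) :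
    (B7 g e hb).PosDef ∧
    B7 g e hb * A7 g e hb =
      Matrix.of (fun _ _ => (1 : ℝ)) +
        (1 / (g * hb)) • Matrix.of (fun i j => pdot (xi7 e i) (xi7 e j)) ∧
    (B7 g e hb * A7 g e hb).IsSymm := by
  have hpos : 0 < e ^ 2 - 2 * g * hb := by
    have := (lt_div_iff₀ (by positivity : (0:ℝ) < 2 * hb)).mp hg
    nlinarith
  have hgh : 0 < g * hb := by positivity
  have hprod : B7 g e hb * A7 g e hb =
      Matrix.of (fun _ _ => (1 : ℝ)) +
        (1 / (g * hb)) • Matrix.of (fun i j => pdot (xi7 e i) (xi7 e j)) := by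
    ext i j
    simp only [B7, A7, Matrix.diagonal_mul, Matrix.of_apply, Matrix.add_apply,
      Matrix.smul_apply, smul_eq_mul]
    by_cases hi : i = 0
    · subst hi
      simp only [if_pos rfl, xi7, pdot]
      simp
      field_simp
    · simp only [if_neg hi]
      field_simp
  refine ⟨?_, hprod, ?_⟩
  · rw [B7, Matrix.posDef_diagonal_iff]
    intro i
    by_cases hi : i = 0 <;> simp [hi] <;> positivity
  · rw [hprod]
    unfold Matrix.IsSymm
    ext i j
    simp [pdot, mul_comm]
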